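/- For all nonzero complex numbers u, v, w, the triple (uA, vB, wC) is a triangle triple on ℂ^N: the three operators are invertible and satisfy (uA)(vB) = q^2·(vB)(uA), (vB)(wC) = q^2·(wC)(vB), (wC)(uA) = q^2·(uA)(wC); moreover (uA)^N = u^N·Id, (vB)^N = v^N·Id, (wC)^N = w^N·Id and q^{-1}·(uA)(vB)(wC) = (u·v·w)·Id; and the triple is irreducible, i.e. the only subspaces of ℂ^N mapped into themselves by uA, vB and wC are 0 and ℂ^N. -/

import Mathlib

/-! `A` is multiplication by the clock function `k ↦ (q²)^k`, which is injective because `q²` is a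
primitive `N`-th root of unity, and `B` is the cyclic shift. A nonzero subspace invariant under `A`
contains some `e_k` (apply to one of its vectors a Lagrange polynomial in `A`), hence all `e_k` by
invariance under `B`. The commutation relations and the `N`-th powers are pointwise computations
reducing to `(q²)^(k+1) = q² (q²)^k` in `ZMod N`; in `C^N` the leftover scalar is
`q^(N²) = ((-1)^(N+1))^N = 1`. -/

open TensorProduct

noncomputable section

/-- ℂ^N: functions from ℤ/Nℤ to ℂ. -/
abbrev CN (N : ℕ) := ZMod N → ℂ

/-- The operator A with A e_k = q^{2k} e_k. -/
def opA (q : ℂ) (N : ℕ) : Module.End ℂ (CN N) where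
  toFun f := fun k => q ^ (2 * k.val) * f k
  map_add' f g := by funext k; simp [mul_add]
  map_smul' c f := by funext k; simp [smul_eq_mul]; ring

/-- The operator B with B e_k = e_{k+1}. -/
def opB (N : ℕ) : Module.End ℂ (CN N) where
  toFun f := fun k => f (k - 1)
  map_add' f g := by funext k; simp
  map_smul' c f := by funext k; simp

/-- The operator C with C e_k = q^{1-2k} e_{k-1}, i.e. (C f)(k) = q^{-1-2k} f(k+1). -/
def opC (q : ℂ) (N : ℕ) : Module.End ℂ (CN N) where
  toFun f := fun k => q ^ (-1 - 2 * (k.val : ℤ)) * f (k + 1)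
  map_add' f g := by funext k; simp [mul_add]
  map_smul' c f := by funext k; simp [smul_eq_mul]; ring

/-- A Weyl pair: invertible endomorphisms with X Y = q² Y X. -/
def IsWeylPair (q : ℂ) {V : Type*} [AddCommMonoid V] [Module ℂ V]
    (X Y : Module.End ℂ V) : Prop :=
  IsUnit X ∧ IsUnit Y ∧ X * Y = q ^ 2 • (Y * X)

/-- A subspace invariant under both X and Y. -/
def WeylInvariant {V : Type*} [AddCommMonoid V] [Module ℂ V]
    (X Y : Module.End ℂ V) (W : Submodule ℂ V) : Prop :=
  (∀ v ∈ W, X v ∈ W) ∧ (∀ v ∈ W, Y v ∈ W)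

/-- An irreducible Weyl pair. -/
def IsIrreducibleWeylPair (q : ℂ) {V : Type*} [AddCommMonoid V] [Module ℂ V]
    (X Y : Module.End ℂ V) : Prop :=
  IsWeylPair q X Y ∧ Nontrivial V ∧
    ∀ W : Submodule ℂ V, WeylInvariant X Y W → W = ⊥ ∨ W = ⊤
/-- A triangle triple: invertible endomorphisms with XY = q²YX, YZ = q²ZY, ZX = q²XZ. -/
def IsTriangleTriple (q : ℂ) {V : Type*} [AddCommMonoid V] [Module ℂ V]
    (X Y Z : Module.End ℂ V) : Prop :=
  IsUnit X ∧ IsUnit Y ∧ IsUnit Z ∧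
    X * Y = q ^ 2 • (Y * X) ∧ Y * Z = q ^ 2 • (Z * Y) ∧ Z * X = q ^ 2 • (X * Z)

/-- A subspace invariant under X, Y and Z. -/
def TriangleInvariant {V : Type*} [AddCommMonoid V] [Module ℂ V]
    (X Y Z : Module.End ℂ V) (W : Submodule ℂ V) : Prop :=
  (∀ v ∈ W, X v ∈ W) ∧ (∀ v ∈ W, Y v ∈ W) ∧ (∀ v ∈ W, Z v ∈ W)

/-- An irreducible triangle triple. -/
def IsIrreducibleTriangleTriple (q : ℂ) {V : Type*} [AddCommMonoid V] [Module ℂ V]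
    (X Y Z : Module.End ℂ V) : Prop :=
  IsTriangleTriple q X Y Z ∧ Nontrivial V ∧
    ∀ W : Submodule ℂ V, TriangleInvariant X Y Z W → W = ⊥ ∨ W = ⊤

section General

lemma pow_zmod_val_add {M : Type*} [Monoid M] {N : ℕ} [NeZero N] {ζ : M} (hζ : ζ ^ N = 1)
    (a b : ZMod N) : ζ ^ (a + b).val = ζ ^ a.val * ζ ^ b.val := by
  rw [ZMod.val_add, ← pow_eq_pow_mod _ hζ, pow_add]

lemma pow_zmod_val_natCast {M : Type*} [Monoid M] {N : ℕ} {ζ : M} (hζ : ζ ^ N = 1) (n : ℕ) :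
    ζ ^ (n : ZMod N).val = ζ ^ n := by
  rw [ZMod.val_natCast, ← pow_eq_pow_mod _ hζ]

lemma smul_mul_smul_eq_of_mul_eq_smul_mul {R A : Type*} [CommSemiring R] [Semiring A]
    [Algebra R A] {X Y : A} {c : R} (h : X * Y = c • (Y * X)) (x y : R) :
    (x • X) * (y • Y) = c • ((y • Y) * (x • X)) := by
  rw [smul_mul_smul_comm, smul_mul_smul_comm, h, smul_comm, mul_comm x y]

lemma isUnit_smul_of_pow_eq_one {K A : Type*} [Field K] [Ring A] [Algebra K A] {N : ℕ}
    (hN : N ≠ 0) {X : A} (hX : X ^ N = 1) {u : K} (hu : u ≠ 0) : IsUnit (u • X) :=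
  ((isUnit_pow_iff hN).1 (hX ▸ isUnit_one)).smul (Units.mk0 u hu)

lemma apply_mem_of_smul_apply_mem {K V : Type*} [Field K] [AddCommGroup V] [Module K V]
    {W : Submodule K V} {X : Module.End K V} {u : K} (hu : u ≠ 0)
    (hX : ∀ v ∈ W, (u • X) v ∈ W) : ∀ v ∈ W, X v ∈ W :=
  fun v hv => (W.smul_mem_iff hu).1 (hX v hv)

lemma single_mem_of_forall_mul_mem {K ι : Type*} [Field K] [Fintype ι] [DecidableEq ι]
    {χ : ι → K} (hχ : Function.Injective χ) {W : Submodule K (ι → K)}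
    (hW : ∀ f ∈ W, χ * f ∈ W) {f : ι → K} (hf : f ∈ W) {k : ι} (hk : f k ≠ 0) :
    Pi.single k 1 ∈ W := by
  have hprod : ∀ s : Finset ι, (fun i => (∏ j ∈ s, (χ i - χ j)) * f i) ∈ W := by
    intro s
    induction s using Finset.induction_on with
    | empty => simpa using hf
    | insert j s hj ih =>
      have hstep : (fun i => (∏ l ∈ insert j s, (χ i - χ l)) * f i) =
          χ * (fun i => (∏ l ∈ s, (χ i - χ l)) * f i) -
            χ j • (fun i => (∏ l ∈ s, (χ i - χ l)) * f i) := by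
        funext i
        simp only [Finset.prod_insert hj, Pi.sub_apply, Pi.mul_apply, Pi.smul_apply, smul_eq_mul]
        ring
      rw [hstep]
      exact W.sub_mem (hW _ ih) (W.smul_mem _ ih)
  -- multiplying by `∏_{j ≠ k} (χ - χ j)` kills every coordinate but the `k`-th
  set c := ∏ j ∈ Finset.univ.erase k, (χ k - χ j)
  have hc : c ≠ 0 := Finset.prod_ne_zero_iff.2 fun j hj =>
    sub_ne_zero.2 (hχ.ne (Finset.ne_of_mem_erase hj).symm)
  have hsep : (fun i => (∏ j ∈ Finset.univ.erase k, (χ i - χ j)) * f i) =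
      (c * f k) • Pi.single k 1 := by
    funext i
    by_cases hi : i = k
    · subst hi
      simp [c]
    · have hzero : ∏ j ∈ Finset.univ.erase k, (χ i - χ j) = 0 :=
        Finset.prod_eq_zero (Finset.mem_erase.2 ⟨hi, Finset.mem_univ i⟩) (sub_self _)
      simp [hi, hzero]
  exact (W.smul_mem_iff (mul_ne_zero hc hk)).1 (hsep ▸ hprod _)

end General

def clock (ζ : ℂ) (N : ℕ) : CN N := fun k => ζ ^ k.val

section Clock

variable {N : ℕ} {ζ : ℂ}

lemma clock_add_natCast [NeZero N] (hζ : ζ ^ N = 1) (k : ZMod N) (n : ℕ) :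
    clock ζ N (k + n) = ζ ^ n * clock ζ N k := by
  rw [clock, clock, pow_zmod_val_add hζ, pow_zmod_val_natCast hζ, mul_comm]

lemma clock_add_one [NeZero N] (hζ : ζ ^ N = 1) (k : ZMod N) :
    clock ζ N (k + 1) = ζ * clock ζ N k := by
  simpa using clock_add_natCast hζ k 1

lemma clock_eq_mul_clock_sub_one [NeZero N] (hζ : ζ ^ N = 1) (k : ZMod N) :
    clock ζ N k = ζ * clock ζ N (k - 1) := by
  rw [← clock_add_one hζ, sub_add_cancel]

lemma clock_pow_eq_one (hζ : ζ ^ N = 1) : clock ζ N ^ N = 1 := by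
  funext k
  rw [Pi.pow_apply, clock, ← pow_mul, mul_comm, pow_mul, hζ, one_pow, Pi.one_apply]

lemma clock_injective [NeZero N] (hζ : IsPrimitiveRoot ζ N) : Function.Injective (clock ζ N) :=
  fun a b h => ZMod.val_injective N (hζ.pow_inj a.val_lt b.val_lt h)

end Clock

section Operators

variable {N : ℕ} {q : ℂ}

lemma opA_eq_mulLeft : opA q N = LinearMap.mulLeft ℂ (clock (q ^ 2) N) :=
  LinearMap.ext fun f => funext fun k => by simp [opA, clock, pow_mul]

lemma opA_apply (f : CN N) (k : ZMod N) : opA q N f k = clock (q ^ 2) N k * f k := by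
  rw [opA_eq_mulLeft]
  rfl

lemma opB_apply (f : CN N) (k : ZMod N) : opB N f k = f (k - 1) := rfl

lemma opC_apply (f : CN N) (k : ZMod N) :
    opC q N f k = (q * clock (q ^ 2) N k)⁻¹ * f (k + 1) := by
  have hexp : -1 - 2 * (k.val : ℤ) = -((1 + 2 * k.val : ℕ) : ℤ) := by push_cast; ring
  simp only [opC, LinearMap.coe_mk, AddHom.coe_mk, clock]
  rw [hexp, zpow_neg, zpow_natCast, pow_add, pow_one, pow_mul]

lemma opB_single (k : ZMod N) : opB N (Pi.single k 1) = Pi.single (k + 1) 1 := by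
  funext j
  simp [opB_apply, Pi.single_apply, sub_eq_iff_eq_add]

lemma opA_pow_eq_one (hq2 : (q ^ 2) ^ N = 1) : opA q N ^ N = 1 := by
  rw [opA_eq_mulLeft, LinearMap.pow_mulLeft, clock_pow_eq_one hq2, LinearMap.mulLeft_one]
  rfl

lemma opB_pow_apply (n : ℕ) (f : CN N) (k : ZMod N) : (opB N ^ n) f k = f (k - n) := by
  induction n generalizing f with
  | zero => simp
  | succ n ih => rw [pow_succ, Module.End.mul_apply, ih, opB_apply, Nat.cast_succ, sub_sub]

lemma opB_pow_eq_one : opB N ^ N = 1 :=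
  LinearMap.ext fun f => funext fun k => by rw [opB_pow_apply, ZMod.natCast_self, sub_zero]; rfl

lemma opC_pow_apply [NeZero N] (hq2 : (q ^ 2) ^ N = 1) (n : ℕ) (f : CN N) (k : ZMod N) :
    (opC q N ^ n) f k = (q ^ (n * n) * clock (q ^ 2) N k ^ n)⁻¹ * f (k + n) := by
  induction n generalizing f with
  | zero => simp
  | succ n ih =>
    rw [pow_succ, Module.End.mul_apply, ih, opC_apply, clock_add_natCast hq2, ← mul_assoc,
      ← mul_inv, Nat.cast_succ, add_assoc]
    ring_nf

lemma opC_pow_eq_one (hqN : q ^ N = (-1) ^ (N + 1)) : opC q N ^ N = 1 := by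
  have : NeZero N := ⟨by rintro rfl; norm_num at hqN⟩
  have hq2 : (q ^ 2) ^ N = 1 := by
    rw [← pow_mul, mul_comm, pow_mul, hqN, ← pow_mul, mul_comm, pow_mul, neg_one_sq, one_pow]
  have hqNN : q ^ (N * N) = 1 := by
    rw [pow_mul, hqN, ← pow_mul, mul_comm, (Nat.even_mul_succ_self N).neg_one_pow]
  refine LinearMap.ext fun f => funext fun k => ?_
  rw [opC_pow_apply hq2, hqNN, ← Pi.pow_apply, clock_pow_eq_one hq2, ZMod.natCast_self]
  simp

lemma opA_mul_opB [NeZero N] (hq2 : (q ^ 2) ^ N = 1) :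
    opA q N * opB N = q ^ 2 • (opB N * opA q N) := by
  refine LinearMap.ext fun f => funext fun k => ?_
  simp only [Module.End.mul_apply, LinearMap.smul_apply, Pi.smul_apply, smul_eq_mul,
    opA_apply, opB_apply]
  rw [clock_eq_mul_clock_sub_one hq2, mul_assoc]

lemma opB_mul_opC [NeZero N] (hq2 : (q ^ 2) ^ N = 1) (hq0 : q ≠ 0) :
    opB N * opC q N = q ^ 2 • (opC q N * opB N) := by
  refine LinearMap.ext fun f => funext fun k => ?_
  simp only [Module.End.mul_apply, LinearMap.smul_apply, Pi.smul_apply, smul_eq_mul,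
    opB_apply, opC_apply, sub_add_cancel, add_sub_cancel_right]
  rw [clock_eq_mul_clock_sub_one hq2 k]
  field_simp

lemma opC_mul_opA [NeZero N] (hq2 : (q ^ 2) ^ N = 1) :
    opC q N * opA q N = q ^ 2 • (opA q N * opC q N) := by
  refine LinearMap.ext fun f => funext fun k => ?_
  simp only [Module.End.mul_apply, LinearMap.smul_apply, Pi.smul_apply, smul_eq_mul,
    opA_apply, opC_apply]
  rw [clock_add_one hq2]
  ring

lemma opA_mul_opB_mul_opC [NeZero N] (hq2 : (q ^ 2) ^ N = 1) (hq0 : q ≠ 0) :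
    opA q N * opB N * opC q N = q • 1 := by
  refine LinearMap.ext fun f => funext fun k => ?_
  simp only [Module.End.mul_apply, LinearMap.smul_apply, Pi.smul_apply, smul_eq_mul,
    opA_apply, opB_apply, opC_apply, sub_add_cancel, Module.End.one_apply]
  have hclock : clock (q ^ 2) N (k - 1) ≠ 0 := pow_ne_zero _ (pow_ne_zero 2 hq0)
  rw [clock_eq_mul_clock_sub_one hq2 k]
  field_simp

lemma eq_top_of_single_mem_of_opB_mem [NeZero N] {W : Submodule ℂ (CN N)} {k : ZMod N}
    (hk : Pi.single k 1 ∈ W) (hB : ∀ f ∈ W, opB N f ∈ W) : W = ⊤ := by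
  have horbit : ∀ n : ℕ, Pi.single (k + n) 1 ∈ W := by
    intro n
    induction n with
    | zero => simpa using hk
    | succ n ih => simpa [← add_assoc, opB_single] using hB _ ih
  rw [eq_top_iff, ← (Pi.basisFun ℂ (ZMod N)).span_eq, Submodule.span_le]
  rintro _ ⟨m, rfl⟩
  simpa using horbit (m - k).val

theorem isIrreducibleWeylPair_opA_opB [NeZero N] (hq : IsPrimitiveRoot (q ^ 2) N) :
    IsIrreducibleWeylPair q (opA q N) (opB N) := by
  have hN := NeZero.ne N
  refine ⟨⟨(isUnit_pow_iff hN).1 (opA_pow_eq_one hq.pow_eq_one ▸ isUnit_one),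
    (isUnit_pow_iff hN).1 (opB_pow_eq_one ▸ isUnit_one), opA_mul_opB hq.pow_eq_one⟩,
    inferInstance, fun W ⟨hA, hB⟩ => ?_⟩
  refine or_iff_not_imp_left.2 fun hW => ?_
  obtain ⟨f, hf, hf0⟩ := W.ne_bot_iff.1 hW
  obtain ⟨k, hk⟩ := Function.ne_iff.1 hf0
  have hmul : ∀ g ∈ W, clock (q ^ 2) N * g ∈ W := fun g hg => by
    simpa [opA_eq_mulLeft] using hA g hg
  exact eq_top_of_single_mem_of_opB_mem
    (single_mem_of_forall_mul_mem (clock_injective hq) hmul hf hk) hB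

end Operators

theorem stmt15_general (N : ℕ) (q : ℂ)
    (hqN : q ^ N = (-1 : ℂ) ^ (N + 1)) (hq : IsPrimitiveRoot (q ^ 2) N)
    (u v w : ℂ) (hu : u ≠ 0) (hv : v ≠ 0) (hw : w ≠ 0) :
    IsIrreducibleTriangleTriple q (u • opA q N) (v • opB N) (w • opC q N) ∧
    (u • opA q N) ^ N = (u ^ N) • (1 : Module.End ℂ (CN N)) ∧
    (v • opB N) ^ N = (v ^ N) • (1 : Module.End ℂ (CN N)) ∧
    (w • opC q N) ^ N = (w ^ N) • (1 : Module.End ℂ (CN N)) ∧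
    q⁻¹ • (u • opA q N * (v • opB N) * (w • opC q N)) =
      (u * v * w) • (1 : Module.End ℂ (CN N)) := by
  have hN : N ≠ 0 := by rintro rfl; norm_num at hqN
  have : NeZero N := ⟨hN⟩
  have hq2 := hq.pow_eq_one
  have hq0 : q ≠ 0 := fun h => hq.ne_zero hN (by rw [h, zero_pow two_ne_zero])
  have hA := opA_pow_eq_one hq2
  have hB : opB N ^ N = 1 := opB_pow_eq_one
  have hC := opC_pow_eq_one hqN
  have hAB := isIrreducibleWeylPair_opA_opB hq
  refine ⟨⟨⟨isUnit_smul_of_pow_eq_one hN hA hu, isUnit_smul_of_pow_eq_one hN hB hv,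
    isUnit_smul_of_pow_eq_one hN hC hw,
    smul_mul_smul_eq_of_mul_eq_smul_mul (opA_mul_opB hq2) u v,
    smul_mul_smul_eq_of_mul_eq_smul_mul (opB_mul_opC hq2 hq0) v w,
    smul_mul_smul_eq_of_mul_eq_smul_mul (opC_mul_opA hq2) w u⟩, hAB.2.1,
    fun W ⟨hWA, hWB, _⟩ => hAB.2.2 W
      ⟨apply_mem_of_smul_apply_mem hu hWA, apply_mem_of_smul_apply_mem hv hWB⟩⟩,
    by rw [smul_pow, hA], by rw [smul_pow, hB], by rw [smul_pow, hC], ?_⟩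
  rw [smul_mul_smul_comm, smul_mul_smul_comm, opA_mul_opB_mul_opC hq2 hq0, smul_smul, smul_smul]
  congr 1
  field_simp

/-- for nonzero u, v, w, the triple (uA, vB, wC) is an irreducible
triangle triple on ℂ^N with (uA)^N = u^N·Id, (vB)^N = v^N·Id, (wC)^N = w^N·Id
and q⁻¹(uA)(vB)(wC) = uvw·Id. -/
theorem stmt15 (N : ℕ) (hN : 1 ≤ N) (q : ℂ)
    (hqN : q ^ N = (-1 : ℂ) ^ (N + 1)) (hq : IsPrimitiveRoot (q ^ 2) N)
    (u v w : ℂ) (hu : u ≠ 0) (hv : v ≠ 0) (hw : w ≠ 0) :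
    IsIrreducibleTriangleTriple q (u • opA q N) (v • opB N) (w • opC q N) ∧
    (u • opA q N) ^ N = (u ^ N) • (1 : Module.End ℂ (CN N)) ∧
    (v • opB N) ^ N = (v ^ N) • (1 : Module.End ℂ (CN N)) ∧
    (w • opC q N) ^ N = (w ^ N) • (1 : Module.End ℂ (CN N)) ∧
    q⁻¹ • (u • opA q N * (v • opB N) * (w • opC q N)) =
      (u * v * w) • (1 : Module.End ℂ (CN N)) :=
  stmt15_general N q hqN hq u v w hu hv hw

end
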